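/- For every positive integer n, a(a(n)) = a(n) + n − 1 = b(n) − 1 and a(b(n)) = a(n) + b(n). -/

import Mathlib

/-!
With `x = mφ` and `t = fract x ∈ (0, 1)` (positive because `φ` is irrational), the identity
`φ² = φ + 1` gives `⌊x⌋ φ = ⌊x⌋ + m - t (φ - 1)` and `(⌊x⌋ + m) φ = 2⌊x⌋ + m + t (2 - φ)`;
both error terms lie strictly between `0` and `1` because `1 < φ < 2`.
-/

noncomputable def φ : ℝ := (1 + Real.sqrt 5) / 2
noncomputable def a (n : ℕ) : ℤ := ⌊(n : ℝ) * φ⌋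
noncomputable def b (n : ℕ) : ℤ := ⌊(n : ℝ) * φ ^ 2⌋

open Real

theorem φ_sq : φ ^ 2 = φ + 1 := goldenRatio_sq

theorem fract_intCast_mul_φ_pos {m : ℤ} (hm : m ≠ 0) : 0 < Int.fract (m * φ) :=
  Int.fract_pos.mpr ((goldenRatio_irrational.intCast_mul hm).ne_int _)

theorem floor_intCast_mul_φ_sq (m : ℤ) : ⌊(m : ℝ) * φ ^ 2⌋ = ⌊(m : ℝ) * φ⌋ + m := by
  rw [φ_sq, mul_add, mul_one, Int.floor_add_intCast]

theorem floor_mul_φ_eq (m : ℤ) :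
    (⌊(m : ℝ) * φ⌋ : ℝ) * φ = ⌊(m : ℝ) * φ⌋ + m - Int.fract (m * φ) * (φ - 1) := by
  rw [← Int.self_sub_fract (m * φ)]
  linear_combination (m : ℝ) * φ_sq

theorem floor_floor_intCast_mul_φ_mul_φ {m : ℤ} (hm : m ≠ 0) :
    ⌊(⌊(m : ℝ) * φ⌋ : ℝ) * φ⌋ = ⌊(m : ℝ) * φ⌋ + m - 1 := by
  have ht0 := fract_intCast_mul_φ_pos hm
  have ht1 := Int.fract_lt_one ((m : ℝ) * φ)
  have hφ1 : 1 < φ := one_lt_goldenRatio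
  have hφ2 : φ < 2 := goldenRatio_lt_two
  rw [Int.floor_eq_iff, floor_mul_φ_eq]
  push_cast
  constructor <;> nlinarith

theorem floor_floor_intCast_mul_φ_sq_mul_φ {m : ℤ} (hm : m ≠ 0) :
    ⌊(⌊(m : ℝ) * φ ^ 2⌋ : ℝ) * φ⌋ = ⌊(m : ℝ) * φ⌋ + ⌊(m : ℝ) * φ ^ 2⌋ := by
  have ht0 := fract_intCast_mul_φ_pos hm
  have ht1 := Int.fract_lt_one ((m : ℝ) * φ)
  have hφ1 : 1 < φ := one_lt_goldenRatio
  have hφ2 : φ < 2 := goldenRatio_lt_two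
  have hsplit : (⌊(m : ℝ) * φ ^ 2⌋ : ℝ) * φ =
      2 * ⌊(m : ℝ) * φ⌋ + m + Int.fract (m * φ) * (2 - φ) := by
    rw [floor_intCast_mul_φ_sq, Int.cast_add, add_mul, floor_mul_φ_eq]
    linear_combination -Int.floor_add_fract ((m : ℝ) * φ)
  rw [Int.floor_eq_iff, hsplit, floor_intCast_mul_φ_sq]
  push_cast
  constructor <;> nlinarith

theorem a_of_a_and_a_of_b (n : ℕ) (hn : 0 < n) :
    ⌊((a n : ℤ) : ℝ) * φ⌋ = a n + n - 1 ∧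
    ⌊((a n : ℤ) : ℝ) * φ⌋ = b n - 1 ∧
    ⌊((b n : ℤ) : ℝ) * φ⌋ = a n + b n := by
  have hm : (n : ℤ) ≠ 0 := by omega
  have haa := floor_floor_intCast_mul_φ_mul_φ hm
  have hb := floor_intCast_mul_φ_sq (n : ℤ)
  have hab := floor_floor_intCast_mul_φ_sq_mul_φ hm
  simp only [Int.cast_natCast] at haa hb hab
  unfold a b
  refine ⟨haa, ?_, hab⟩
  rw [haa, hb]
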